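/- Let d = m + k with m, k ≥ 1, let n ≥ 2, fix rows x₂, …, x_n ∈ ℝ^d and b ∈ ℝ^k. For y ∈ ℝ^m, let X(y) be the n×d matrix whose first row is (y, b) (missing part y, observed part b) and whose remaining rows are x₂, …, x_n, with sample mean μ(y) and sample covariance Σ(y); assume Σ(y) is invertible for every y ∈ ℝ^m. Then (i) the function y ↦ det Σ(y) is a polynomial function of degree at most 2 in the entries of y; and (ii) any y* ∈ ℝ^m satisfying the fixed-point equation y* = μ(y*)_miss + Σ(y*)_mo (Σ(y*)_oo)⁻¹ (b − μ(y*)_obs) is a global minimizer of y ↦ det Σ(y). -/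

import Mathlib

/-!
Splitting off the first row, `Σ(y) = A + n⁻¹ v vᵀ`, where `A` is the scatter matrix of the remaining
rows divided by `n - 1` (positive semidefinite and independent of `y`) and `v = (y, b) - a` with
`a` the mean of the remaining rows. The matrix determinant lemma, valid without inverting `A`,
gives `det Σ(y) = det A + n⁻¹ vᵀ adj(A) v`: a polynomial of degree at most two in `y`.

For the minimization, write `S = Σ(y*)` and `v* = v(y*)`. From `S adj(A) v* = det S • v*` we get
`adj(A) v* = det S • S⁻¹ v*`, and the fixed-point equation says exactly that `S⁻¹ v*` has zero
missing part. Hence the determinant along `y* + t (y - y*)` is `det S + c t²`, without linear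
term. It is nonnegative for every `t` and positive at `t = 0`, so `c ≥ 0` and `t = 0` is a minimum.
-/

open Matrix

namespace Matrix

theorem sum_vecMulVec {ι m n R : Type*} [NonUnitalNonAssocSemiring R] (s : Finset ι)
    (g : ι → m → R) (w : n → R) :
    ∑ l ∈ s, vecMulVec (g l) w = vecMulVec (∑ l ∈ s, g l) w := by
  ext i j
  simp [vecMulVec_apply, Matrix.sum_apply, Finset.sum_mul]

theorem vecMulVec_sum {ι m n R : Type*} [NonUnitalNonAssocSemiring R] (s : Finset ι)
    (w : m → R) (g : ι → n → R) :
    ∑ l ∈ s, vecMulVec w (g l) = vecMulVec w (∑ l ∈ s, g l) := by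
  ext i j
  simp [vecMulVec_apply, Matrix.sum_apply, Finset.mul_sum]

theorem mulVec_sum_elim_zero {σ τ R : Type*} [Fintype σ] [Fintype τ] [CommRing R]
    (S : Matrix (σ ⊕ τ) (σ ⊕ τ) R) (w : τ → R) :
    S *ᵥ Sum.elim 0 w = Sum.elim (S.toBlocks₁₂ *ᵥ w) (S.toBlocks₂₂ *ᵥ w) := by
  conv_lhs => rw [← fromBlocks_toBlocks S]
  simp [fromBlocks_mulVec]

theorem exists_mulVec_sum_elim_zero_eq_of_fixedPoint {σ τ R : Type*} [Fintype σ] [Fintype τ]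
    [DecidableEq τ] [CommRing R] {S : Matrix (σ ⊕ τ) (σ ⊕ τ) R} (hS : IsUnit S.toBlocks₂₂.det)
    {μ : σ ⊕ τ → R} {y : σ → R} {b : τ → R}
    (hfix : ∀ i, y i = μ (Sum.inl i) +
      (S.toBlocks₁₂ *ᵥ (S.toBlocks₂₂⁻¹ *ᵥ (b - fun j => μ (Sum.inr j)))) i) :
    ∃ w : τ → R, S *ᵥ Sum.elim 0 w = Sum.elim y b - μ := by
  refine ⟨S.toBlocks₂₂⁻¹ *ᵥ (b - fun j => μ (Sum.inr j)), ?_⟩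
  rw [mulVec_sum_elim_zero, mulVec_mulVec _ S.toBlocks₂₂, mul_nonsing_inv _ hS, one_mulVec]
  ext (i | j)
  · exact eq_sub_of_add_eq' (hfix i).symm
  · rfl

theorem PosSemidef.isUnit_det_toBlocks₂₂ {σ τ : Type*} [Fintype σ] [Fintype τ] [DecidableEq σ]
    [DecidableEq τ] {S : Matrix (σ ⊕ τ) (σ ⊕ τ) ℝ} (hS : S.PosSemidef) (hdet : IsUnit S.det) :
    IsUnit S.toBlocks₂₂.det :=
  ((hS.posDef_iff_isUnit.mpr ((isUnit_iff_isUnit_det S).mpr hdet)).submatrix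
    Sum.inr_injective).det_pos.ne'.isUnit

variable {κ : Type*} [Fintype κ] [DecidableEq κ]

theorem det_add_vecMulVec_of_isUnit {R : Type*} [CommRing R] {A : Matrix κ κ R}
    (hA : IsUnit A.det) (u v : κ → R) :
    (A + vecMulVec u v).det = A.det + v ⬝ᵥ (A.adjugate *ᵥ u) := by
  have hfactor : A + vecMulVec u v = A * (1 + vecMulVec (A⁻¹ *ᵥ u) v) := by
    rw [Matrix.mul_add, Matrix.mul_one, mul_vecMulVec, mulVec_mulVec, mul_nonsing_inv _ hA,
      one_mulVec]
  have hadj : A.adjugate = A.det • A⁻¹ := by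
    rw [inv_def, smul_smul, Ring.mul_inverse_cancel _ hA, one_smul]
  rw [hfactor, det_mul, vecMulVec_eq Unit, det_one_add_replicateCol_mul_replicateRow, hadj,
    smul_mulVec, dotProduct_smul, smul_eq_mul, mul_one_add]

theorem det_add_vecMulVec (A : Matrix κ κ ℝ) (u v : κ → ℝ) :
    (A + vecMulVec u v).det = A.det + v ⬝ᵥ (A.adjugate *ᵥ u) := by
  -- Both sides are continuous in `A`, and `A + t • 1` is invertible except at the finitely many
  -- roots of the characteristic polynomial of `-A`.
  have hdense : Dense {t : ℝ | IsUnit (A + t • 1).det} := by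
    have hfin : {t : ℝ | ¬IsUnit (A + t • 1).det}.Finite := by
      refine (Polynomial.finite_setOfPred_isRoot (charpoly_monic (-A)).ne_zero).subset
        fun t ht => ?_
      rw [Set.mem_ofPred_eq, isUnit_iff_ne_zero, not_not] at ht
      rw [Set.mem_ofPred_eq, Polynomial.IsRoot, eval_charpoly, sub_neg_eq_add, add_comm,
        scalar_apply, ← smul_one_eq_diagonal, ht]
    simpa only [Set.compl_ofPred, not_not] using hfin.countable.dense_compl ℝ
  have hcont : Continuous fun t : ℝ => A + t • (1 : Matrix κ κ ℝ) := by fun_prop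
  have hext := (hcont.add continuous_const).matrix_det.ext_on hdense
    (hcont.matrix_det.add (continuous_const.dotProduct
      (hcont.matrix_adjugate.matrix_mulVec continuous_const)))
    fun t ht => det_add_vecMulVec_of_isUnit ht u v
  simpa using congrFun hext 0

theorem adjugate_mulVec_eq_det_smul {A : Matrix κ κ ℝ} {u v w : κ → ℝ}
    (hS : IsUnit (A + vecMulVec u v).det) (hw : (A + vecMulVec u v) *ᵥ w = u) :
    A.adjugate *ᵥ u = (A + vecMulVec u v).det • w := by
  apply mulVec_injective_iff_isUnit.mpr ((isUnit_iff_isUnit_det _).mpr hS)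
  rw [mulVec_smul, hw, det_add_vecMulVec, add_mulVec, mulVec_mulVec, mul_adjugate,
    smul_mulVec, one_mulVec, vecMulVec_mulVec, op_smul_eq_smul, add_smul]

theorem det_le_det_add_smul_vecMulVec {A : Matrix κ κ ℝ} (hA : A.PosSemidef) {c : ℝ} (hc : 0 ≤ c)
    {v δ w : κ → ℝ} (hS : IsUnit (A + c • vecMulVec v v).det)
    (hw : (A + c • vecMulVec v v) *ᵥ w = v) (hδw : δ ⬝ᵥ w = 0) :
    (A + c • vecMulVec v v).det ≤ (A + c • vecMulVec (v + δ) (v + δ)).det := by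
  set P := A.adjugate
  have hdet (u : κ → ℝ) : (A + c • vecMulVec u u).det = A.det + c * (u ⬝ᵥ (P *ᵥ u)) := by
    rw [← vecMulVec_smul, det_add_vecMulVec, smul_dotProduct, smul_eq_mul]
  have hnonneg (u : κ → ℝ) : 0 ≤ (A + c • vecMulVec u u).det :=
    (hA.add ((posSemidef_vecMulVec_self_star u).smul hc)).det_nonneg
  have hcross : δ ⬝ᵥ (P *ᵥ v) = 0 := by
    rw [← vecMulVec_smul] at hS hw
    rw [adjugate_mulVec_eq_det_smul hS hw, dotProduct_smul, hδw, smul_zero]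
  have hsymm : v ⬝ᵥ (P *ᵥ δ) = δ ⬝ᵥ (P *ᵥ v) := by
    have hPt : Pᵀ = P := by
      rw [adjugate_transpose, ← conjTranspose_eq_transpose_of_trivial, hA.1.eq]
    rw [dotProduct_mulVec, ← mulVec_transpose, hPt, dotProduct_comm]
  have hquad (t : ℝ) : (A + c • vecMulVec (v + t • δ) (v + t • δ)).det
      = (A + c • vecMulVec v v).det + c * (δ ⬝ᵥ (P *ᵥ δ)) * (t * t) := by
    rw [hdet, hdet]
    simp only [mulVec_add, mulVec_smul, dotProduct_add, add_dotProduct, smul_dotProduct,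
      dotProduct_smul, smul_eq_mul, hsymm]
    linear_combination (2 * c * t) * hcross
  have hSpos : 0 < (A + c • vecMulVec v v).det := (hnonneg v).lt_of_ne hS.ne_zero.symm
  have hdisc := discrim_le_zero (a := c * (δ ⬝ᵥ (P *ᵥ δ))) (b := 0)
      (c := (A + c • vecMulVec v v).det) fun t => by
    simpa only [hquad, zero_mul, add_zero, add_comm] using hnonneg (v + t • δ)
  have hcoeff : 0 ≤ c * (δ ⬝ᵥ (P *ᵥ δ)) := by
    rw [discrim] at hdisc
    nlinarith
  calc (A + c • vecMulVec v v).det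
      ≤ (A + c • vecMulVec v v).det + c * (δ ⬝ᵥ (P *ᵥ δ)) * (1 * 1) := by linarith
    _ = (A + c • vecMulVec (v + δ) (v + δ)).det := by rw [← hquad, one_smul]

theorem det_le_det_of_mulVec_sum_elim_zero_eq_smul {σ τ : Type*} [Fintype σ] [Fintype τ]
    [DecidableEq σ] [DecidableEq τ] {A : Matrix (σ ⊕ τ) (σ ⊕ τ) ℝ} (hA : A.PosSemidef)
    {c r : ℝ} (hc : 0 ≤ c) (hr : r ≠ 0) {a : σ ⊕ τ → ℝ} {b : τ → ℝ} {y₀ : σ → ℝ} {w : τ → ℝ}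
    (hS : IsUnit (A + c • vecMulVec (Sum.elim y₀ b - a) (Sum.elim y₀ b - a)).det)
    (hw : (A + c • vecMulVec (Sum.elim y₀ b - a) (Sum.elim y₀ b - a)) *ᵥ Sum.elim (0 : σ → ℝ) w
      = r • (Sum.elim y₀ b - a)) (y : σ → ℝ) :
    (A + c • vecMulVec (Sum.elim y₀ b - a) (Sum.elim y₀ b - a)).det
      ≤ (A + c • vecMulVec (Sum.elim y b - a) (Sum.elim y b - a)).det := by
  have hy : Sum.elim y b - a = (Sum.elim y₀ b - a) + Sum.elim (y - y₀) (0 : τ → ℝ) := by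
    ext (i | j) <;> simp
  rw [hy]
  refine det_le_det_add_smul_vecMulVec hA hc hS (w := r⁻¹ • Sum.elim (0 : σ → ℝ) w) ?_ ?_
  · rw [mulVec_smul, hw, smul_smul, inv_mul_cancel₀ hr, one_smul]
  · simp [dotProduct, Fintype.sum_sum_type]

end Matrix

namespace MvPolynomial

theorem totalDegree_dotProduct_mulVec_le {R σ κ : Type*} [CommSemiring R] [Fintype κ]
    (M : Matrix κ κ R) {V : κ → MvPolynomial σ R} (hV : ∀ i, (V i).totalDegree ≤ 1) :
    (V ⬝ᵥ (M.map C *ᵥ V)).totalDegree ≤ 2 := by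
  have hMV (i : κ) : ((M.map C *ᵥ V) i).totalDegree ≤ 1 := by
    refine (totalDegree_finsetSum _ _).trans (Finset.sup_le fun j _ => ?_)
    refine (totalDegree_mul _ _).trans ?_
    simpa only [map_apply, totalDegree_C, zero_add] using hV j
  refine (totalDegree_finsetSum _ _).trans (Finset.sup_le fun i _ => ?_)
  exact (totalDegree_mul _ _).trans (add_le_add (hV i) (hMV i))

theorem exists_totalDegree_le_two_det_add_smul_vecMulVec {σ τ : Type*} [Fintype σ] [Fintype τ]
    [DecidableEq σ] [DecidableEq τ] (A : Matrix (σ ⊕ τ) (σ ⊕ τ) ℝ) (c : ℝ) (b : τ → ℝ)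
    (a : σ ⊕ τ → ℝ) :
    ∃ p : MvPolynomial σ ℝ, p.totalDegree ≤ 2 ∧ ∀ y : σ → ℝ,
      (A + c • vecMulVec (Sum.elim y b - a) (Sum.elim y b - a)).det = eval y p := by
  set V : σ ⊕ τ → MvPolynomial σ ℝ := Sum.elim X (C ∘ b) - C ∘ a
  have hV (i : σ ⊕ τ) : (V i).totalDegree ≤ 1 := by
    refine (totalDegree_sub _ _).trans (max_le ?_ (by simp))
    cases i <;> simp [totalDegree_X]
  have heval (y : σ → ℝ) : eval y ∘ V = Sum.elim y b - a := by
    ext (i | j) <;> simp [V]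
  refine ⟨C A.det + C c * (V ⬝ᵥ (A.adjugate.map C *ᵥ V)), ?_, fun y => ?_⟩
  · refine (totalDegree_add _ _).trans (max_le (by simp) ?_)
    refine (totalDegree_mul _ _).trans ?_
    simpa only [totalDegree_C, zero_add] using totalDegree_dotProduct_mulVec_le _ hV
  · have hmulVec : eval y ∘ (A.adjugate.map C *ᵥ V) = A.adjugate *ᵥ (eval y ∘ V) := by
      ext i
      rw [Function.comp_apply, RingHom.map_mulVec, Matrix.map_map]
      simp only [Function.comp_def, eval_C, Matrix.map_id']
    rw [← vecMulVec_smul, det_add_vecMulVec, smul_dotProduct, smul_eq_mul, map_add,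
      map_mul, eval_C, eval_C, RingHom.map_dotProduct, hmulVec, heval]

end MvPolynomial

section SampleCovariance

variable {ι κ : Type*} [Fintype ι]

noncomputable def sampleMean (f : ι → κ → ℝ) : κ → ℝ := (Fintype.card ι : ℝ)⁻¹ • ∑ l, f l

noncomputable def scatter (f : ι → κ → ℝ) : Matrix κ κ ℝ :=
  ∑ l, vecMulVec (f l - sampleMean f) (f l - sampleMean f)

theorem posSemidef_scatter [Finite κ] (f : ι → κ → ℝ) : (scatter f).PosSemidef :=
  posSemidef_sum _ fun l _ => posSemidef_vecMulVec_self_star (f l - sampleMean f)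

theorem sum_sub_sampleMean (f : ι → κ → ℝ) : ∑ l, (f l - sampleMean f) = 0 := by
  rcases isEmpty_or_nonempty ι with hι | hι
  · simp
  rw [Finset.sum_sub_distrib, Finset.sum_const, Finset.card_univ, sampleMean,
    ← Nat.cast_smul_eq_nsmul ℝ, smul_smul, mul_inv_cancel₀ (by positivity), one_smul, sub_self]

theorem sum_vecMulVec_sub_eq_scatter_add (f : ι → κ → ℝ) (a : κ → ℝ) :
    ∑ l, vecMulVec (f l - a) (f l - a) =
      scatter f + (Fintype.card ι : ℝ) • vecMulVec (sampleMean f - a) (sampleMean f - a) := by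
  have hsplit (l : ι) : f l - a = (f l - sampleMean f) + (sampleMean f - a) := by abel
  simp only [hsplit, vecMulVec_add, add_vecMulVec, Finset.sum_add_distrib, sum_vecMulVec,
    vecMulVec_sum, sum_sub_sampleMean, zero_vecMulVec, vecMulVec_zero, Finset.sum_const,
    Finset.card_univ, Nat.cast_smul_eq_nsmul, scatter]
  abel

variable [DecidableEq ι]

theorem sampleMean_update_sub (x : ι → κ → ℝ) (i₀ : ι) (z : κ → ℝ) (hι : 2 ≤ Fintype.card ι) :
    sampleMean (Function.update x i₀ z) - sampleMean (fun l : {l // l ≠ i₀} => x l)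
      = (Fintype.card ι : ℝ)⁻¹ • (z - sampleMean (fun l : {l // l ≠ i₀} => x l)) := by
  have hN : (2 : ℝ) ≤ Fintype.card ι := by exact_mod_cast hι
  have hcard : (Fintype.card {l // l ≠ i₀} : ℝ) = Fintype.card ι - 1 := by
    rw [Fintype.card_subtype_compl, Fintype.card_subtype_eq, Nat.cast_sub (by omega),
      Nat.cast_one]
  have hsum : ∑ l : {l // l ≠ i₀}, x l
      = ((Fintype.card ι : ℝ) - 1) • sampleMean (fun l : {l // l ≠ i₀} => x l) := by
    rw [sampleMean, hcard, smul_smul, mul_inv_cancel₀ (by linarith), one_smul]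
  rw [sampleMean, Fintype.sum_eq_add_sum_subtype_ne _ i₀, Function.update_self,
    Fintype.sum_congr _ _ fun l => Function.update_of_ne l.2 z x, hsum]
  match_scalars
  · field_simp
  · field_simp
    ring

theorem sub_sampleMean_update (x : ι → κ → ℝ) (i₀ : ι) (z : κ → ℝ) (hι : 2 ≤ Fintype.card ι) :
    z - sampleMean (Function.update x i₀ z)
      = (1 - (Fintype.card ι : ℝ)⁻¹) • (z - sampleMean (fun l : {l // l ≠ i₀} => x l)) := by
  linear_combination (norm := module) -sampleMean_update_sub x i₀ z hι

theorem scatter_update (x : ι → κ → ℝ) (i₀ : ι) (z : κ → ℝ) (hι : 2 ≤ Fintype.card ι) :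
    scatter (Function.update x i₀ z) = scatter (fun l : {l // l ≠ i₀} => x l)
      + (1 - (Fintype.card ι : ℝ)⁻¹) • vecMulVec (z - sampleMean (fun l : {l // l ≠ i₀} => x l))
          (z - sampleMean (fun l : {l // l ≠ i₀} => x l)) := by
  have hN : (Fintype.card ι : ℝ) ≠ 0 := by positivity
  have h := sum_vecMulVec_sub_eq_scatter_add (Function.update x i₀ z)
    (sampleMean (fun l : {l // l ≠ i₀} => x l))
  rw [sampleMean_update_sub x i₀ z hι, smul_vecMulVec, vecMulVec_smul,
    Fintype.sum_eq_add_sum_subtype_ne _ i₀, Function.update_self,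
    Fintype.sum_congr _ _ fun l => by rw [Function.update_of_ne l.2]] at h
  change _ + scatter (fun l : {l // l ≠ i₀} => x l) = _ at h
  linear_combination (norm := skip) -h
  match_scalars <;> field_simp <;> ring

theorem smul_scatter_update (x : ι → κ → ℝ) (i₀ : ι) (z : κ → ℝ) (hι : 2 ≤ Fintype.card ι) :
    ((Fintype.card ι : ℝ) - 1)⁻¹ • scatter (Function.update x i₀ z)
      = ((Fintype.card ι : ℝ) - 1)⁻¹ • scatter (fun l : {l // l ≠ i₀} => x l)
        + (Fintype.card ι : ℝ)⁻¹ • vecMulVec (z - sampleMean (fun l : {l // l ≠ i₀} => x l))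
          (z - sampleMean (fun l : {l // l ≠ i₀} => x l)) := by
  have hN : (2 : ℝ) ≤ Fintype.card ι := by exact_mod_cast hι
  have hN1 : (Fintype.card ι : ℝ) - 1 ≠ 0 := by linarith
  rw [scatter_update x i₀ z hι, smul_add, smul_smul]
  congr 2
  field_simp

end SampleCovariance

/-- With the first row's missing part `y` varying, (i) `y ↦ det Σ(y)` is a
polynomial of degree at most 2 in the entries of `y`, and (ii) any fixed point of the
conditional-mean imputation equation is a global minimizer of `y ↦ det Σ(y)`. -/
theorem det_cov_polynomial_and_fixed_point_min
    (m k n : ℕ) (hn : 2 ≤ n)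
    (x : Fin n → (Fin m ⊕ Fin k → ℝ)) (b : Fin k → ℝ) :
    let row : (Fin m → ℝ) → Fin n → (Fin m ⊕ Fin k → ℝ) :=
      fun y i => if i = ⟨0, by omega⟩ then Sum.elim y b else x i
    let mean : (Fin m → ℝ) → (Fin m ⊕ Fin k → ℝ) := fun y => (n : ℝ)⁻¹ • ∑ i, row y i
    let cov : (Fin m → ℝ) → Matrix (Fin m ⊕ Fin k) (Fin m ⊕ Fin k) ℝ :=
      fun y => ((n : ℝ) - 1)⁻¹ • ∑ i, vecMulVec (row y i - mean y) (row y i - mean y)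
    ∀ _hinv : ∀ y : Fin m → ℝ, IsUnit (cov y).det,
    (∃ p : MvPolynomial (Fin m) ℝ, p.totalDegree ≤ 2 ∧
        ∀ y : Fin m → ℝ, (cov y).det = MvPolynomial.eval y p) ∧
    (∀ ystar : Fin m → ℝ,
      (∀ i : Fin m, ystar i = mean ystar (Sum.inl i) +
        ((cov ystar).toBlocks₁₂ *ᵥ (((cov ystar).toBlocks₂₂)⁻¹ *ᵥ
          (b - fun j => mean ystar (Sum.inr j)))) i) →
      ∀ y : Fin m → ℝ, (cov ystar).det ≤ (cov y).det) := by
  intro row mean cov hinv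
  set i₀ : Fin n := ⟨0, by omega⟩
  set a := sampleMean (fun l : {l // l ≠ i₀} => x l)
  set A := ((n : ℝ) - 1)⁻¹ • scatter (fun l : {l // l ≠ i₀} => x l)
  have hn' : (2 : ℝ) ≤ n := by exact_mod_cast hn
  have hcard : 2 ≤ Fintype.card (Fin n) := by simpa using hn
  have hrow (y : Fin m → ℝ) : row y = Function.update x i₀ (Sum.elim y b) := by
    ext i : 1
    simp only [row, Function.update_apply, i₀]
  have hmean (y : Fin m → ℝ) : mean y = sampleMean (row y) := by
    simp only [mean, sampleMean, Fintype.card_fin]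
  have hcov (y : Fin m → ℝ) :
      cov y = A + (n : ℝ)⁻¹ • vecMulVec (Sum.elim y b - a) (Sum.elim y b - a) := by
    have h := smul_scatter_update x i₀ (Sum.elim y b) hcard
    rw [Fintype.card_fin, ← hrow, scatter, ← hmean] at h
    exact h
  have hA : A.PosSemidef := (posSemidef_scatter _).smul (inv_nonneg.mpr (by linarith))
  refine ⟨?_, fun ystar hfix y => ?_⟩
  · obtain ⟨p, hp, hpy⟩ :=
      MvPolynomial.exists_totalDegree_le_two_det_add_smul_vecMulVec A (n : ℝ)⁻¹ b a
    exact ⟨p, hp, fun y => by rw [hcov, hpy]⟩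
  · have hcenter := sub_sampleMean_update x i₀ (Sum.elim ystar b) hcard
    rw [Fintype.card_fin, ← hrow, ← hmean] at hcenter
    have hS : (cov ystar).PosSemidef :=
      hcov ystar ▸ hA.add ((posSemidef_vecMulVec_self_star _).smul (by positivity))
    obtain ⟨w, hw⟩ :=
      exists_mulVec_sum_elim_zero_eq_of_fixedPoint (hS.isUnit_det_toBlocks₂₂ (hinv ystar)) hfix
    rw [hcenter, hcov] at hw
    rw [hcov, hcov]
    exact det_le_det_of_mulVec_sum_elim_zero_eq_smul hA (by positivity)
      (sub_pos.mpr (inv_lt_one_of_one_lt₀ (by linarith))).ne' (hcov ystar ▸ hinv ystar) hw y
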